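/- arXiv:2311.14223 — 6 statements merged into one kernel-verified Lean document; each statement's English description precedes it below -/
import Mathlib

section
/- Let p ∈ (0,1) and let M : ℤ≥0 × ℤ≥−1 → ℝ satisfy the boundary conditions M(r,−1) = 1 for all r ≥ 0 and M(0,t) = 0 for all t ≥ 0, together with the recursion M(r,t) = p·M(r−1,t) + (1−p)·M(r,t−1) for all integers r ≥ 1 and t ≥ 0. Then for all integers r ≥ 1 and t ≥ 0, M(r,t) = (1−p)^{t+1} · Σ_{k=1}^{r} C(t+r−k, r−k) · p^{r−k}. -/
noncomputable def Fform (p : ℝ) (r : ℕ) (t : ℤ) : ℝ :=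
  (1 - p) ^ (t + 1) * ∑ j ∈ Finset.range r, (Nat.choose (t + j).toNat j : ℝ) * p ^ j

lemma sumform (p : ℝ) (t : ℤ) (r : ℕ) :
    ∑ k ∈ Finset.Icc 1 r, (Nat.choose (t + r - k).toNat (r - k) : ℝ) * p ^ (r - k)
      = ∑ j ∈ Finset.range r, (Nat.choose (t + j).toNat j : ℝ) * p ^ j := by
  apply Finset.sum_nbij' (i := fun k => r - k) (j := fun j => r - j)
  · intro a ha; simp at ha ⊢; omega
  · intro a ha; simp at ha ⊢; omega
  · intro a ha; simp at ha ⊢; omega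
  · intro a ha; simp at ha ⊢; omega
  · intro a ha
    simp at ha
    have : t + (r:ℤ) - a = t + ((r - a : ℕ) : ℤ) := by push_cast [Nat.cast_sub ha.2]; ring
    rw [this]

lemma sum_neg_one (p : ℝ) (r : ℕ) (hr : 1 ≤ r) :
    ∑ j ∈ Finset.range r, (Nat.choose ((-1 : ℤ) + j).toNat j : ℝ) * p ^ j = 1 := by
  rw [Finset.sum_eq_single 0]
  · simp
  · intro j hj hj0
    have h1 : ((-1 : ℤ) + j).toNat = j - 1 := by omega
    rw [h1, Nat.choose_eq_zero_of_lt (by omega)]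
    simp
  · intro h; simp at h; omega

lemma Fneg1 (p : ℝ) (r : ℕ) (hr : 1 ≤ r) : Fform p r (-1) = 1 := by
  unfold Fform
  rw [sum_neg_one p r hr]
  norm_num

lemma Fzero (p : ℝ) (t : ℤ) : Fform p 0 t = 0 := by simp [Fform]

lemma geo (p : ℝ) : ∀ r : ℕ,
    ∑ j ∈ Finset.range (r + 1), p ^ j = p * ∑ j ∈ Finset.range r, p ^ j + 1 := by
  intro r
  induction r with
  | zero => simp
  | succ r ih =>
    conv_lhs => rw [Finset.sum_range_succ, ih]
    conv_rhs => rw [Finset.sum_range_succ]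
    ring

lemma key (p : ℝ) (n : ℕ) : ∀ r : ℕ,
    ∑ j ∈ Finset.range (r + 1), (Nat.choose (n + 1 + j) j : ℝ) * p ^ j
      = p * ∑ j ∈ Finset.range r, (Nat.choose (n + 1 + j) j : ℝ) * p ^ j
        + ∑ j ∈ Finset.range (r + 1), (Nat.choose (n + j) j : ℝ) * p ^ j := by
  intro r
  induction r with
  | zero => simp
  | succ r ih =>
    conv_lhs => rw [Finset.sum_range_succ, ih]
    conv_lhs => rw [Finset.sum_range_succ]
    conv_rhs => rw [Finset.sum_range_succ, Finset.sum_range_succ, Finset.sum_range_succ]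
    have pas : Nat.choose (n + 1 + (r + 1)) (r + 1)
        = Nat.choose (n + 1 + r) r + Nat.choose (n + (r + 1)) (r + 1) := by
      have h := Nat.choose_succ_succ (n + r + 1) r
      have e1 : n + 1 + (r + 1) = n + r + 1 + 1 := by omega
      have e2 : n + 1 + r = n + r + 1 := by omega
      have e3 : n + (r + 1) = n + r + 1 := by omega
      rw [e1, e2, e3, h]
    rw [pas]
    push_cast
    ring

lemma Frec (p : ℝ) (r : ℕ) (hr : 1 ≤ r) (t : ℤ) (ht : 0 ≤ t) :
    Fform p r t = p * Fform p (r - 1) t + (1 - p) * Fform p r (t - 1) := by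
  obtain ⟨s, rfl⟩ : ∃ s : ℕ, r = s + 1 := ⟨r - 1, by omega⟩
  lift t to ℕ using ht
  unfold Fform
  have hz1 : (1 - p) ^ ((t : ℤ) + 1) = (1 - p) ^ (t + 1 : ℕ) := by
    rw [← zpow_natCast]; push_cast; ring_nf
  have hz2 : (1 - p) ^ ((t : ℤ) - 1 + 1) = (1 - p) ^ (t : ℕ) := by
    rw [← zpow_natCast]; ring_nf
  rw [hz1, hz2]
  have htn : ∀ j : ℕ, ((t : ℤ) + j).toNat = t + j := by intro j; omega
  simp only [htn, Nat.add_sub_cancel]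
  cases t with
  | zero =>
    simp only [Nat.zero_add, Nat.choose_self, Nat.cast_one, one_mul, Nat.cast_zero]
    have h4 : ∀ j : ℕ, (((0:ℤ)) - 1 + j).toNat = ((-1 : ℤ) + j).toNat := by intro j; omega
    simp only [h4]
    rw [sum_neg_one p (s + 1) (by omega), geo p s]
    ring
  | succ m =>
    have htm : ∀ j : ℕ, (((m + 1 : ℕ) : ℤ) - 1 + j).toNat = m + j := by intro j; omega
    simp only [htm]
    rw [key p m s]
    ring

/-- Lemma 2 of the paper.
Let `p ∈ (0,1)` and let `M : ℤ≥0 × ℤ≥−1 → ℝ` satisfy `M(r,−1) = 1` for all `r ≥ 0`,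
`M(0,t) = 0` for all `t ≥ 0`, and the recursion
`M(r,t) = p·M(r−1,t) + (1−p)·M(r,t−1)` for all integers `r ≥ 1` and `t ≥ 0`.
Then for all integers `r ≥ 1` and `t ≥ 0`,
`M(r,t) = (1−p)^{t+1} · Σ_{k=1}^{r} C(t+r−k, r−k) · p^{r−k}`. -/
theorem stmt0 (p : ℝ) (hp0 : 0 < p) (hp1 : p < 1) (M : ℕ → ℤ → ℝ)
    (hinit : ∀ r : ℕ, M r (-1) = 1)
    (hbound : ∀ t : ℤ, 0 ≤ t → M 0 t = 0)
    (hrec : ∀ r : ℕ, 1 ≤ r → ∀ t : ℤ, 0 ≤ t →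
      M r t = p * M (r - 1) t + (1 - p) * M r (t - 1)) :
    ∀ r : ℕ, 1 ≤ r → ∀ t : ℤ, 0 ≤ t →
      M r t = (1 - p) ^ (t + 1) *
        ∑ k ∈ Finset.Icc 1 r, (Nat.choose (t + r - k).toNat (r - k) : ℝ) * p ^ (r - k) := by
  suffices h : ∀ n : ℕ, ∀ r : ℕ, 1 ≤ r → M r (-1 + n) = Fform p r (-1 + n) by
    intro r hr t ht
    have e : t = -1 + ((t + 1).toNat : ℤ) := by omega
    have h2 := h (t + 1).toNat r hr
    rw [← e] at h2
    rw [h2]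
    unfold Fform
    rw [sumform]
  intro n
  induction n with
  | zero =>
    intro r hr
    rw [show (-1 + ((0 : ℕ) : ℤ)) = -1 by norm_num, hinit, Fneg1 p r hr]
  | succ n ih =>
    have hu : (0 : ℤ) ≤ -1 + ((n + 1 : ℕ) : ℤ) := by push_cast; omega
    have hu1 : (-1 + ((n + 1 : ℕ) : ℤ)) - 1 = -1 + (n : ℤ) := by push_cast; ring
    intro r hr
    induction r, hr using Nat.le_induction with
    | base =>
      rw [hrec 1 le_rfl _ hu, hbound _ hu, hu1, ih 1 le_rfl,
        Frec p 1 le_rfl _ hu, hu1]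
      norm_num [Fzero]
    | succ r hr ihr =>
      rw [hrec (r + 1) (by omega) _ hu]
      simp only [Nat.add_sub_cancel]
      rw [hu1, ihr, ih (r + 1) (by omega),
        Frec p (r + 1) (by omega) _ hu, hu1]
      simp only [Nat.add_sub_cancel]
end

section
/- Let P > 0, write p̄ = P/(1+P), and define M_P(r,t) = (1−p̄)^{t+1} · Σ_{k=1}^{r} C(t+r−k, r−k) · p̄^{r−k} for integers r ≥ 1, t ≥ 0. Then for every real v with 0 < v < P, limsup_{r→∞} (1/r) · log M_P(r, ⌊r/v⌋) ≤ −((1+v)/v) · D(v/(1+v) ‖ p̄). -/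
open Filter

/-- The binary Kullback–Leibler divergence `D(q‖p)` (natural logarithms). -/
noncomputable def klBin (q p : ℝ) : ℝ :=
  q * Real.log (q / p) + (1 - q) * Real.log ((1 - q) / (1 - p))

/-- The explicit single-sample MSE `M_P(r,t)` of the linear scheme with SNR `P`. -/
noncomputable def MP (P : ℝ) (r t : ℕ) : ℝ :=
  (1 - P / (1 + P)) ^ (t + 1) *
    ∑ k ∈ Finset.Icc 1 r, (Nat.choose (t + r - k) (r - k) : ℝ) * (P / (1 + P)) ^ (r - k)

/-!
With `p = P/(1+P)` and `w = v/(1+v) < p`, the binomial probability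
`C(t+j, j) w^j (1-w)^t ≤ 1` gives `C(t+j, j) p^j ≤ (p/w)^j (1-w)^{-t}`, so every one of the
`r` terms of `M_P(r,t)` is at most `(1-p)^t (p/w)^r (1-w)^{-t}`. Taking `t = ⌊r/v⌋`, the
exponent per unit `r` tends to `log (p/w) + v⁻¹ log ((1-p)/(1-w)) = -((1+v)/v) D(w‖p)`.
-/

open Finset Real Topology

lemma choose_mul_pow_mul_pow_le_one {q : ℝ} (hq0 : 0 ≤ q) (hq1 : q ≤ 1) {n k : ℕ} (hk : k ≤ n) :
    (n.choose k : ℝ) * q ^ k * (1 - q) ^ (n - k) ≤ 1 := by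
  have h1q : 0 ≤ 1 - q := by linarith
  calc (n.choose k : ℝ) * q ^ k * (1 - q) ^ (n - k)
      = q ^ k * (1 - q) ^ (n - k) * n.choose k := by ring
    _ ≤ ∑ i ∈ range (n + 1), q ^ i * (1 - q) ^ (n - i) * n.choose i :=
        single_le_sum (f := fun i => q ^ i * (1 - q) ^ (n - i) * (n.choose i : ℝ))
          (fun i _ => by positivity) (mem_range.2 (Nat.lt_succ_of_le hk))
    _ = 1 := by rw [← add_pow]; norm_num

lemma choose_add_mul_pow_le {p w : ℝ} (hp : 0 ≤ p) (hw0 : 0 < w) (hw1 : w < 1) (s j : ℕ) :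
    ((s + j).choose j : ℝ) * p ^ j ≤ (p / w) ^ j / (1 - w) ^ s := by
  have hbin := choose_mul_pow_mul_pow_le_one hw0.le hw1.le (Nat.le_add_left j s)
  rw [Nat.add_sub_cancel] at hbin
  have h1w : 0 < 1 - w := by linarith
  rw [le_div_iff₀ (by positivity)]
  calc ((s + j).choose j : ℝ) * p ^ j * (1 - w) ^ s
      = ((s + j).choose j : ℝ) * w ^ j * (1 - w) ^ s * (p / w) ^ j := by
        rw [div_pow]; field_simp
    _ ≤ (p / w) ^ j := mul_le_of_le_one_left (by positivity) hbin

lemma sum_choose_mul_pow_le {p w : ℝ} (hw0 : 0 < w) (hw1 : w < 1) (hwp : w ≤ p) (r t : ℕ) :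
    ∑ k ∈ Icc 1 r, ((t + r - k).choose (r - k) : ℝ) * p ^ (r - k) ≤
      r * ((p / w) ^ r / (1 - w) ^ t) := by
  have hterm : ∀ k ∈ Icc 1 r,
      ((t + r - k).choose (r - k) : ℝ) * p ^ (r - k) ≤ (p / w) ^ r / (1 - w) ^ t := by
    intro k hk
    have h1w : 0 < 1 - w := by linarith
    rw [show t + r - k = t + (r - k) by have := (mem_Icc.1 hk).2; omega]
    calc _ ≤ (p / w) ^ (r - k) / (1 - w) ^ t :=
          choose_add_mul_pow_le (hw0.le.trans hwp) hw0 hw1 t (r - k)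
      _ ≤ (p / w) ^ r / (1 - w) ^ t := by
          gcongr
          · exact (one_le_div hw0).2 hwp
          · omega
  simpa using sum_le_card_nsmul _ _ _ hterm

lemma one_le_sum_choose_mul_pow {p : ℝ} (hp : 0 ≤ p) {r : ℕ} (hr : 1 ≤ r) (t : ℕ) :
    1 ≤ ∑ k ∈ Icc 1 r, ((t + r - k).choose (r - k) : ℝ) * p ^ (r - k) := by
  simpa using single_le_sum (f := fun k => ((t + r - k).choose (r - k) : ℝ) * p ^ (r - k))
    (fun k _ => by positivity) (mem_Icc.2 ⟨hr, le_rfl⟩)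

lemma div_one_add_self_mem_Ico {P : ℝ} (hP : 0 ≤ P) : P / (1 + P) ∈ Set.Ico 0 1 :=
  ⟨by positivity, (div_lt_one (by linarith)).2 (by linarith)⟩

lemma pow_le_MP {P : ℝ} (hP : 0 ≤ P) {r : ℕ} (hr : 1 ≤ r) (t : ℕ) :
    (1 - P / (1 + P)) ^ (t + 1) ≤ MP P r t := by
  obtain ⟨hp0, hp1⟩ := div_one_add_self_mem_Ico hP
  exact le_mul_of_one_le_right (pow_nonneg (by linarith) _) (one_le_sum_choose_mul_pow hp0 hr t)

lemma MP_le {P w : ℝ} (hP : 0 ≤ P) (hw0 : 0 < w) (hwP : w ≤ P / (1 + P)) (r t : ℕ) :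
    MP P r t ≤ r * (P / (1 + P) / w) ^ r * ((1 - P / (1 + P)) / (1 - w)) ^ t := by
  obtain ⟨hp0, hp1⟩ := div_one_add_self_mem_Ico hP
  have hw1 : w < 1 := hwP.trans_lt hp1
  calc MP P r t
      ≤ (1 - P / (1 + P)) ^ t * (r * ((P / (1 + P) / w) ^ r / (1 - w) ^ t)) :=
        mul_le_mul (pow_le_pow_of_le_one (by linarith) (by linarith) (Nat.le_succ t))
          (sum_choose_mul_pow_le hw0 hw1 hwP r t)
          (sum_nonneg fun k _ => by positivity) (pow_nonneg (by linarith) _)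
    _ = r * (P / (1 + P) / w) ^ r * ((1 - P / (1 + P)) / (1 - w)) ^ t := by
        rw [div_pow (1 - P / (1 + P))]; ring

lemma log_MP_le {P w : ℝ} (hP : 0 ≤ P) (hw0 : 0 < w) (hwP : w ≤ P / (1 + P)) {r : ℕ}
    (hr : 1 ≤ r) (t : ℕ) :
    log (MP P r t) ≤
      log r + r * log (P / (1 + P) / w) + t * log ((1 - P / (1 + P)) / (1 - w)) := by
  obtain ⟨hp0, hp1⟩ := div_one_add_self_mem_Ico hP
  have hw1 : w < 1 := hwP.trans_lt hp1
  have hMP : 0 < MP P r t := (pow_pos (by linarith) _).trans_le (pow_le_MP hP hr t)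
  have hr0 : (0 : ℝ) < r := by exact_mod_cast hr
  have hpw : 0 < P / (1 + P) / w := div_pos (hw0.trans_le hwP) hw0
  have hρ : 0 < (1 - P / (1 + P)) / (1 - w) := div_pos (by linarith) (by linarith)
  calc log (MP P r t)
      ≤ log (r * (P / (1 + P) / w) ^ r * ((1 - P / (1 + P)) / (1 - w)) ^ t) :=
        log_le_log hMP (MP_le hP hw0 hwP r t)
    _ = _ := by
        rw [log_mul (by positivity) (by positivity), log_mul (by positivity) (by positivity),
          log_pow, log_pow]

lemma log_MP_ge {P : ℝ} (hP : 0 ≤ P) {r : ℕ} (hr : 1 ≤ r) (t : ℕ) :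
    (t + 1) * log (1 - P / (1 + P)) ≤ log (MP P r t) := by
  obtain ⟨hp0, hp1⟩ := div_one_add_self_mem_Ico hP
  have h := log_le_log (pow_pos (by linarith) _) (pow_le_MP hP hr t)
  rwa [log_pow, Nat.cast_succ] at h

lemma one_div_mul_log_MP_le {P w : ℝ} (hP : 0 ≤ P) (hw0 : 0 < w) (hwP : w ≤ P / (1 + P))
    {r : ℕ} (hr : 1 ≤ r) (t : ℕ) :
    1 / (r : ℝ) * log (MP P r t) ≤
      log r / r + log (P / (1 + P) / w) + t / r * log ((1 - P / (1 + P)) / (1 - w)) := by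
  have hr0 : (0 : ℝ) < r := by exact_mod_cast hr
  rw [one_div_mul_eq_div, div_le_iff₀ hr0]
  refine (log_MP_le hP hw0 hwP hr t).trans_eq ?_
  generalize log (P / (1 + P) / w) = a
  generalize log ((1 - P / (1 + P)) / (1 - w)) = b
  field_simp

lemma le_one_div_mul_log_MP {P c : ℝ} (hP : 0 ≤ P) {r t : ℕ} (hr : 1 ≤ r)
    (ht : (t : ℝ) ≤ c * r) :
    (c + 1) * log (1 - P / (1 + P)) ≤ 1 / (r : ℝ) * log (MP P r t) := by
  obtain ⟨hp0, hp1⟩ := div_one_add_self_mem_Ico hP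
  have hr1 : (1 : ℝ) ≤ r := by exact_mod_cast hr
  have hlog : log (1 - P / (1 + P)) ≤ 0 := log_nonpos (by linarith) (by linarith)
  calc (c + 1) * log (1 - P / (1 + P)) ≤ (t + 1) / r * log (1 - P / (1 + P)) := by
        refine mul_le_mul_of_nonpos_right ?_ hlog
        rw [div_le_iff₀ (by positivity)]
        linarith
    _ = 1 / r * ((t + 1) * log (1 - P / (1 + P))) := by ring
    _ ≤ 1 / r * log (MP P r t) :=
        mul_le_mul_of_nonneg_left (log_MP_ge hP hr t) (by positivity)

lemma tendsto_natFloor_div_div_natCast {v : ℝ} (hv : 0 ≤ v) :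
    Tendsto (fun r : ℕ => (⌊(r : ℝ) / v⌋₊ : ℝ) / r) atTop (𝓝 (1 / v)) := by
  simpa [Function.comp_def, div_eq_inv_mul] using
    (tendsto_nat_floor_mul_div_atTop (one_div_nonneg.2 hv)).comp tendsto_natCast_atTop_atTop

lemma klBin_eq_neg (q p : ℝ) :
    klBin q p = -(q * log (p / q) + (1 - q) * log ((1 - p) / (1 - q))) := by
  rw [klBin, ← inv_div p q, ← inv_div (1 - p), log_inv, log_inv]
  ring

/-- MSE exponent of Theorem 1. For `P > 0`, `p̄ = P/(1+P)`, and
`0 < v < P`: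
`limsup_{r→∞} (1/r)·log M_P(r, ⌊r/v⌋) ≤ −((1+v)/v)·D(v/(1+v) ‖ p̄)`. -/
theorem stmt4 (P : ℝ) (hP : 0 < P) (v : ℝ) (hv0 : 0 < v) (hvP : v < P) :
    Filter.limsup
        (fun r : ℕ => (1 / (r : ℝ)) * Real.log (MP P r ⌊(r : ℝ) / v⌋₊)) atTop ≤
      -(((1 + v) / v) * klBin (v / (1 + v)) (P / (1 + P))) := by
  have hwp : v / (1 + v) ≤ P / (1 + P) := by
    rw [div_le_div_iff₀ (by linarith) (by linarith)]; linarith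
  set p := P / (1 + P)
  set w := v / (1 + v) with hw
  set g : ℕ → ℝ := fun r => log r / r + log (p / w) + ⌊(r : ℝ) / v⌋₊ / r * log ((1 - p) / (1 - w))
  have hle : ∀ᶠ r : ℕ in atTop, 1 / (r : ℝ) * log (MP P r ⌊(r : ℝ) / v⌋₊) ≤ g r :=
    eventually_atTop.2 ⟨1, fun r hr => one_div_mul_log_MP_le hP.le (by positivity) hwp hr _⟩
  have hcobdd : IsCoboundedUnder (· ≤ ·) atTop
      fun r : ℕ => 1 / (r : ℝ) * log (MP P r ⌊(r : ℝ) / v⌋₊) :=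
    isCoboundedUnder_le_of_eventually_le atTop <| eventually_atTop.2 ⟨1, fun r hr =>
      le_one_div_mul_log_MP hP.le hr ((Nat.floor_le (by positivity)).trans_eq (div_eq_inv_mul _ _))⟩
  have hg : Tendsto g atTop (𝓝 (0 + log (p / w) + 1 / v * log ((1 - p) / (1 - w)))) :=
    ((isLittleO_log_id_atTop.tendsto_div_nhds_zero.comp tendsto_natCast_atTop_atTop).add_const
      _).add ((tendsto_natFloor_div_div_natCast hv0.le).mul_const _)
  calc _ ≤ limsup g atTop := limsup_le_limsup hle hcobdd hg.isBoundedUnder_le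
    _ = 0 + log (p / w) + 1 / v * log ((1 - p) / (1 - w)) := hg.limsup_eq
    _ = _ := by
        rw [klBin_eq_neg, hw]
        field_simp
        ring
end

section
/- Let P > 0, write p̄ = P/(1+P), and define M_P(r,t) = (1−p̄)^{t+1} · Σ_{k=1}^{r} C(t+r−k, r−k) · p̄^{r−k} for integers r ≥ 1, t ≥ 0. Then for every real v with 0 < v < P and every integer r ≥ 1, M_P(r, ⌊r/v⌋) ≤ r · exp( −(r/v − 1) · (1+v) · D(v/(1+v) ‖ p̄) ). -/
open Real Finset

theorem klBin_nonneg {q p : ℝ} (hq0 : 0 < q) (hq1 : q < 1) (hp0 : 0 < p) (hp1 : p < 1) :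
    0 ≤ klBin q p := by
  have h₁ : q * (1 - (q / p)⁻¹) ≤ q * log (q / p) :=
    mul_le_mul_of_nonneg_left (one_sub_inv_le_log_of_pos (by positivity)) hq0.le
  have h₂ : (1 - q) * (1 - ((1 - q) / (1 - p))⁻¹) ≤ (1 - q) * log ((1 - q) / (1 - p)) :=
    mul_le_mul_of_nonneg_left (one_sub_inv_le_log_of_pos (div_pos (by linarith) (by linarith)))
      (by linarith)
  have h₃ : q * (1 - (q / p)⁻¹) + (1 - q) * (1 - ((1 - q) / (1 - p))⁻¹) = 0 := by
    field_simp [(by linarith : (1 - q) ≠ 0)]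
    ring
  rw [klBin]
  linarith

theorem klBin_eq_sub_log {q p : ℝ} (hq0 : 0 < q) (hq1 : q < 1) (hp0 : 0 < p) (hp1 : p < 1) :
    klBin q p = (1 - q) * (log (1 - q) - log (1 - p)) - q * (log p - log q) := by
  rw [klBin, log_div hq0.ne' hp0.ne', log_div (by linarith) (by linarith)]
  ring

theorem choose_mul_pow_mul_one_sub_pow_le_one {x : ℝ} (hx0 : 0 ≤ x) (hx1 : x ≤ 1) {n k : ℕ}
    (hk : k ≤ n) : (n.choose k : ℝ) * x ^ k * (1 - x) ^ (n - k) ≤ 1 := by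
  have hx1' : 0 ≤ 1 - x := sub_nonneg.2 hx1
  calc (n.choose k : ℝ) * x ^ k * (1 - x) ^ (n - k)
      ≤ ∑ i ∈ range (n + 1), x ^ i * (1 - x) ^ (n - i) * (n.choose i : ℝ) := by
        rw [mul_rotate]
        exact single_le_sum (f := fun i ↦ x ^ i * (1 - x) ^ (n - i) * (n.choose i : ℝ))
          (fun i _ ↦ by positivity) (mem_range.2 (Nat.lt_succ_of_le hk))
    _ = 1 := by rw [← add_pow, add_sub_cancel, one_pow]

theorem one_sub_pow_mul_choose_mul_pow_le {x p : ℝ} (hx : 0 < x) (hxp : x ≤ p) (hp : p < 1)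
    (t j : ℕ) :
    (1 - p) ^ (t + 1) * ((t + j).choose j * p ^ j) ≤
      (p / x) ^ j * ((1 - p) / (1 - x)) ^ (t + 1) := by
  have hx1 : 0 < 1 - x := by linarith
  have hp1 : 0 < 1 - p := by linarith
  have hbinom : ((t + j).choose j : ℝ) * x ^ j * (1 - x) ^ (t + 1) ≤ 1 := calc
    _ ≤ ((t + j).choose j : ℝ) * x ^ j * (1 - x) ^ t :=
      mul_le_mul_of_nonneg_left (pow_le_pow_of_le_one hx1.le (by linarith) t.le_succ)
        (by positivity)
    _ ≤ 1 := by
      simpa using choose_mul_pow_mul_one_sub_pow_le_one hx.le (by linarith) (Nat.le_add_left j t)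
  calc (1 - p) ^ (t + 1) * ((t + j).choose j * p ^ j)
      = ((t + j).choose j * x ^ j * (1 - x) ^ (t + 1)) *
          ((p / x) ^ j * ((1 - p) / (1 - x)) ^ (t + 1)) := by
        rw [div_pow, div_pow]
        field_simp
    _ ≤ (p / x) ^ j * ((1 - p) / (1 - x)) ^ (t + 1) :=
        mul_le_of_le_one_left
          (mul_nonneg (pow_nonneg (div_pos (hx.trans_le hxp) hx).le j)
            (pow_nonneg (div_pos hp1 hx1).le (t + 1))) hbinom

theorem one_sub_pow_mul_sum_choose_le {x p : ℝ} (hx : 0 < x) (hxp : x ≤ p) (hp : p < 1)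
    (r t : ℕ) :
    (1 - p) ^ (t + 1) * ∑ k ∈ Icc 1 r, ((t + r - k).choose (r - k) : ℝ) * p ^ (r - k) ≤
      r * exp ((r - 1) * (log p - log x) - (t + 1) * (log (1 - x) - log (1 - p))) := by
  have hp0 : 0 < p := hx.trans_le hxp
  have hx1 : 0 < 1 - x := by linarith
  have hp1 : 0 < 1 - p := by linarith
  have hterm : ∀ k ∈ Icc 1 r,
      (1 - p) ^ (t + 1) * (((t + r - k).choose (r - k) : ℝ) * p ^ (r - k)) ≤
        exp ((r - 1) * (log p - log x) - (t + 1) * (log (1 - x) - log (1 - p))) := by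
    intro k hk
    obtain ⟨hk1, hkr⟩ := mem_Icc.1 hk
    have hj : ((r - k : ℕ) : ℝ) ≤ r - 1 := by
      rw [Nat.cast_sub hkr]
      linarith [(Nat.one_le_cast.2 hk1 : (1 : ℝ) ≤ k)]
    have hlog := mul_le_mul_of_nonneg_right hj (sub_nonneg.2 (log_le_log hx hxp))
    rw [show t + r - k = t + (r - k) by omega]
    calc _ ≤ (p / x) ^ (r - k) * ((1 - p) / (1 - x)) ^ (t + 1) :=
          one_sub_pow_mul_choose_mul_pow_le hx hxp hp t (r - k)
      _ = exp ((r - k : ℕ) * (log p - log x) + (t + 1 : ℕ) * (log (1 - p) - log (1 - x))) := by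
          rw [exp_add, exp_nat_mul, exp_nat_mul, exp_sub, exp_sub, exp_log hp0, exp_log hx,
            exp_log hp1, exp_log hx1]
      _ ≤ _ := exp_le_exp.2 (by push_cast; linarith)
  simpa [mul_sum] using sum_le_card_nsmul _ _ _ hterm

theorem one_add_mul_klBin_div_one_add {v p : ℝ} (hv : 0 < v) (hp0 : 0 < p) (hp1 : p < 1) :
    (1 + v) * klBin (v / (1 + v)) p =
      (log (1 - v / (1 + v)) - log (1 - p)) - v * (log p - log (v / (1 + v))) := by
  have h₁ : (1 + v) * (v / (1 + v)) = v := mul_div_cancel₀ v (by linarith)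
  have h₂ : (1 + v) * (1 - v / (1 + v)) = 1 := by rw [mul_sub, h₁]; ring
  rw [klBin_eq_sub_log (by positivity) ((div_lt_one (by linarith)).2 (by linarith)) hp0 hp1]
  linear_combination (log (1 - v / (1 + v)) - log (1 - p)) * h₂ -
    (log p - log (v / (1 + v))) * h₁

theorem stmt5_general (P : ℝ) (v : ℝ) (hv0 : 0 < v) (hvP : v < P) (r : ℕ) :
    MP P r ⌊(r : ℝ) / v⌋₊ ≤
      (r : ℝ) * Real.exp (-((r : ℝ) / v - 1) * (1 + v) * klBin (v / (1 + v)) (P / (1 + P))) := by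
  set p := P / (1 + P)
  set x := v / (1 + v)
  set t := ⌊(r : ℝ) / v⌋₊
  have hx0 : 0 < x := by positivity
  have hxp : x < p := by
    rw [div_lt_div_iff₀ (by linarith) (by linarith)]
    linarith
  have hp1 : p < 1 := (div_lt_one (by linarith)).2 (by linarith)
  have hx1 : x < 1 := hxp.trans hp1
  refine (one_sub_pow_mul_sum_choose_le hx0 hxp.le hp1 r t).trans
    (mul_le_mul_of_nonneg_left (exp_le_exp.2 ?_) r.cast_nonneg)
  rw [mul_assoc, one_add_mul_klBin_div_one_add hv0 (hx0.trans hxp) hp1]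
  set a := log p - log x
  set b := log (1 - x) - log (1 - p)
  have ha : 0 ≤ a := sub_nonneg.2 (log_le_log hx0 hxp.le)
  have hb : 0 ≤ b := sub_nonneg.2 (log_le_log (by linarith) (by linarith))
  have hab : 0 ≤ b - v * a := by
    rw [← one_add_mul_klBin_div_one_add hv0 (hx0.trans hxp) hp1]
    exact mul_nonneg (by linarith) (klBin_nonneg hx0 hx1 (hx0.trans hxp) hp1)
  have ht : (r : ℝ) / v < t + 1 := Nat.lt_floor_add_one _
  have hgap : -((r : ℝ) / v - 1) * (b - v * a) - ((r - 1) * a - (t + 1) * b) =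
      a + (b - v * a) + (t + 1 - r / v) * b := by
    field_simp
    ring
  linarith [mul_nonneg (sub_nonneg.2 ht.le) hb]

/-- non-asymptotic single-sample MSE bound from the proof of Theorem 1.
For `P > 0`, `0 < v < P`, and every integer `r ≥ 1`:
`M_P(r, ⌊r/v⌋) ≤ r · exp( −(r/v − 1)·(1+v)·D(v/(1+v) ‖ p̄) )`. -/
theorem stmt5 (P : ℝ) (hP : 0 < P) (v : ℝ) (hv0 : 0 < v) (hvP : v < P)
    (r : ℕ) (hr : 1 ≤ r) :
    MP P r ⌊(r : ℝ) / v⌋₊ ≤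
      (r : ℝ) * Real.exp (-((r : ℝ) / v - 1) * (1 + v) * klBin (v / (1 + v)) (P / (1 + P))) :=
  stmt5_general P v hv0 hvP r
end

section
/- Let p ∈ (0,1) and R > 0, and let M : ℤ≥0 × ℤ≥−1 → ℝ satisfy the boundary conditions M(r,−1) = 1 for all r ≥ 1 and M(0,t) = exp(−2R(t+1)) for all t ≥ 0, together with the recursion M(r,t) = p·M(r−1,t) + (1−p)·M(r,t−1) for all integers r ≥ 1 and t ≥ 0. Then for all integers r ≥ 1 and t ≥ 0, M(r,t) = (1−p)^{t+1} · Σ_{k=1}^{r} C(t+r−k, r−k) · p^{r−k} + p^{r} · Σ_{s=0}^{t} exp(−2R(t+1−s)) · C(r+s−1, s) · (1−p)^{s}. -/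
open Finset

lemma auxA (x : ℝ) (m : ℕ) : ∀ r : ℕ,
    ∑ j ∈ range (r+1), ((m+1+j).choose j : ℝ) * x^j
      = x * ∑ j ∈ range r, ((m+1+j).choose j : ℝ) * x^j
        + ∑ j ∈ range (r+1), ((m+j).choose j : ℝ) * x^j := by
  intro r
  induction r with
  | zero => simp
  | succ r ih =>
    conv_lhs => rw [sum_range_succ]
    conv_rhs => rw [sum_range_succ (f := fun j => ((m+j).choose j : ℝ) * x^j) (n := r+1),
      sum_range_succ (f := fun j => ((m+1+j).choose j : ℝ) * x^j) (n := r)]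
    rw [ih]
    have hp : (m+1+(r+1)).choose (r+1) = (m+r+1).choose r + (m+r+1).choose (r+1) := by
      have := Nat.choose_succ_succ (m+r+1) r
      convert this using 2 <;> omega
    rw [hp, show m+1+r = m+r+1 from by ring, show m+(r+1) = m+r+1 from by ring]
    push_cast
    ring

lemma auxShift (R p : ℝ) (c : ℕ → ℕ) (n : ℕ) :
    ∑ s ∈ range (n+2), Real.exp (-2*R*((↑(n+1):ℝ)+1-(s:ℝ))) * (c s : ℝ) * (1-p)^s
      = (1-p) * (∑ s ∈ range (n+1), Real.exp (-2*R*((n:ℝ)+1-(s:ℝ))) * (c (s+1) : ℝ) * (1-p)^s)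
        + Real.exp (-2*R*((↑(n+1):ℝ)+1)) * (c 0 : ℝ) := by
  rw [sum_range_succ' (f := fun s => Real.exp (-2*R*((↑(n+1):ℝ)+1-(s:ℝ))) * (c s : ℝ) * (1-p)^s),
    Finset.mul_sum]
  congr 1
  · apply Finset.sum_congr rfl
    intro s _
    rw [show -2*R*((↑(n+1):ℝ)+1-(↑(s+1):ℝ)) = -2*R*((n:ℝ)+1-(s:ℝ)) from by push_cast; ring]
    ring
  · norm_num

lemma auxB (e : ℕ → ℝ) (q : ℝ) (r m : ℕ) :
    ∑ s ∈ range (m+2), e s * ((r+1+s).choose s : ℝ) * q^s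
      = ∑ s ∈ range (m+2), e s * ((r+s).choose s : ℝ) * q^s
        + q * ∑ s ∈ range (m+1), e (s+1) * ((r+1+s).choose s : ℝ) * q^s := by
  rw [sum_range_succ' (f := fun s => e s * ((r+1+s).choose s : ℝ) * q^s),
    sum_range_succ' (f := fun s => e s * ((r+s).choose s : ℝ) * q^s)]
  have h : ∀ s, e (s+1) * ((r+1+(s+1)).choose (s+1) : ℝ) * q^(s+1)
      = e (s+1) * ((r+(s+1)).choose (s+1) : ℝ) * q^(s+1)
        + q * (e (s+1) * ((r+1+s).choose s : ℝ) * q^s) := by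
    intro s
    have hp : (r+1+(s+1)).choose (s+1) = (r+s+1).choose s + (r+s+1).choose (s+1) := by
      have := Nat.choose_succ_succ (r+s+1) s
      convert this using 2 <;> omega
    rw [hp, show r+(s+1) = r+s+1 from by ring, show r+1+s = r+s+1 from by ring]
    push_cast
    ring
  rw [Finset.sum_congr rfl (fun s _ => h s), Finset.sum_add_distrib, ← Finset.mul_sum]
  simp only [Nat.add_zero, Nat.choose_zero_right, Nat.cast_one, pow_zero]
  ring

lemma auxMain (p R : ℝ) (M : ℕ → ℤ → ℝ)
    (hinit : ∀ r : ℕ, 1 ≤ r → M r (-1) = 1)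
    (hbound : ∀ t : ℤ, 0 ≤ t → M 0 t = Real.exp (-2 * R * (t + 1)))
    (hrec : ∀ r : ℕ, 1 ≤ r → ∀ t : ℤ, 0 ≤ t →
      M r t = p * M (r - 1) t + (1 - p) * M r (t - 1)) :
    ∀ n r : ℕ, M (r+1) (n : ℤ) =
      (1-p)^(n+1) * ∑ j ∈ range (r+1), ((n+j).choose j : ℝ) * p^j
      + p^(r+1) * ∑ s ∈ range (n+1),
          Real.exp (-2*R*((n:ℝ)+1-(s:ℝ))) * ((r+s).choose s : ℝ) * (1-p)^s := by
  intro n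
  induction n with
  | zero =>
    intro r
    induction r with
    | zero =>
      rw [show (0:ℕ)+1 = 1 from rfl, show ((0:ℕ):ℤ) = 0 from rfl,
        hrec 1 le_rfl 0 le_rfl]
      simp only [Nat.sub_self]
      rw [hbound 0 le_rfl, show (0:ℤ)-1 = -1 from by ring, hinit 1 le_rfl]
      simp only [Finset.sum_range_one]
      norm_num
      ring
    | succ r ih =>
      rw [show ((0:ℕ):ℤ) = 0 from rfl, hrec (r+1+1) (by omega) 0 le_rfl]
      rw [show r+1+1-1 = r+1 from by omega, show (0:ℤ)-1 = -1 from by ring,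
        hinit (r+1+1) (by omega)]
      rw [show ((0:ℕ):ℤ) = 0 from rfl] at ih
      rw [ih]
      have hA : ∑ j ∈ range (r+1+1), ((0+j).choose j : ℝ) * p^j
          = 1 + p * ∑ j ∈ range (r+1), ((0+j).choose j : ℝ) * p^j := by
        rw [sum_range_succ' (f := fun j => ((0+j).choose j : ℝ) * p^j), Finset.mul_sum]
        simp only [Nat.zero_add, Nat.choose_self, Nat.cast_one, one_mul, pow_zero]
        rw [add_comm]
        congr 1
        apply Finset.sum_congr rfl
        intro s _
        ring
      rw [hA]
      norm_num [Finset.sum_range_one]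
      ring
  | succ n ihn =>
    intro r
    induction r with
    | zero =>
      rw [show (0:ℕ)+1 = 1 from rfl, hrec 1 le_rfl (↑(n+1) : ℤ) (by positivity)]
      simp only [Nat.sub_self]
      rw [hbound (↑(n+1):ℤ) (by positivity),
        show ((n+1:ℕ):ℤ)-1 = (n:ℤ) from by push_cast; ring, ihn 0]
      rw [auxShift R p (fun s => (0+s).choose s) n]
      simp only [Finset.sum_range_one, Nat.zero_add, Nat.choose_self, Nat.cast_one,
        Nat.add_zero, Nat.choose_zero_right, pow_zero, mul_one, one_mul]
      push_cast
      ring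
    | succ r ihr =>
      rw [hrec (r+1+1) (by omega) (↑(n+1) : ℤ) (by positivity)]
      rw [show r+1+1-1 = r+1 from by omega,
        show ((n+1:ℕ):ℤ)-1 = (n:ℤ) from by push_cast; ring, ihr, ihn (r+1)]
      have hA := auxA p n (r+1)
      have hB0 := auxB (fun s => Real.exp (-2*R*((↑(n+1):ℝ)+1-(s:ℝ)))) (1-p) r n
      have hBs : ∑ s ∈ range (n+1),
            Real.exp (-2*R*((↑(n+1):ℝ)+1-((↑(s+1):ℕ):ℝ))) * ((r+1+s).choose s : ℝ) * (1-p)^s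
          = ∑ s ∈ range (n+1),
            Real.exp (-2*R*((n:ℝ)+1-(s:ℝ))) * ((r+1+s).choose s : ℝ) * (1-p)^s := by
        apply Finset.sum_congr rfl
        intro s _
        rw [show -2*R*((↑(n+1):ℝ)+1-((↑(s+1):ℕ):ℝ)) = -2*R*((n:ℝ)+1-(s:ℝ)) from by push_cast; ring]
      rw [hBs] at hB0
      have hB : ∑ s ∈ range (n+1+1), Real.exp (-2*R*((↑(n+1):ℝ)+1-(s:ℝ))) * ((r+1+s).choose s : ℝ) * (1-p)^s
          = ∑ s ∈ range (n+1+1), Real.exp (-2*R*((↑(n+1):ℝ)+1-(s:ℝ))) * ((r+s).choose s : ℝ) * (1-p)^s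
            + (1-p) * ∑ s ∈ range (n+1),
              Real.exp (-2*R*((n:ℝ)+1-(s:ℝ))) * ((r+1+s).choose s : ℝ) * (1-p)^s := hB0
      rw [hA, hB]
      ring


/-- equation (36) of the paper.
Let `p ∈ (0,1)`, `R > 0`, and let `M` satisfy `M(r,−1) = 1` for `r ≥ 1`,
`M(0,t) = exp(−2R(t+1))` for `t ≥ 0`, and the recursion
`M(r,t) = p·M(r−1,t) + (1−p)·M(r,t−1)` for `r ≥ 1`, `t ≥ 0`. Then for all `r ≥ 1`, `t ≥ 0`,
`M(r,t) = (1−p)^{t+1}·Σ_{k=1}^{r} C(t+r−k,r−k)·p^{r−k}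
        + p^{r}·Σ_{s=0}^{t} exp(−2R(t+1−s))·C(r+s−1,s)·(1−p)^{s}`. -/
theorem stmt8 (p R : ℝ) (hp0 : 0 < p) (hp1 : p < 1) (hR : 0 < R) (M : ℕ → ℤ → ℝ)
    (hinit : ∀ r : ℕ, 1 ≤ r → M r (-1) = 1)
    (hbound : ∀ t : ℤ, 0 ≤ t → M 0 t = Real.exp (-2 * R * (t + 1)))
    (hrec : ∀ r : ℕ, 1 ≤ r → ∀ t : ℤ, 0 ≤ t →
      M r t = p * M (r - 1) t + (1 - p) * M r (t - 1)) :
    ∀ r : ℕ, 1 ≤ r → ∀ t : ℤ, 0 ≤ t →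
      M r t =
        (1 - p) ^ (t + 1) *
          ∑ k ∈ Finset.Icc 1 r, (Nat.choose (t + r - k).toNat (r - k) : ℝ) * p ^ (r - k)
        + p ^ r *
          ∑ s ∈ Finset.range (t.toNat + 1),
            Real.exp (-2 * R * ((t : ℝ) + 1 - s)) *
              (Nat.choose (r + s - 1) s : ℝ) * (1 - p) ^ s := by
  intro r hr t ht
  obtain ⟨r, rfl⟩ : ∃ r', r = r' + 1 := ⟨r - 1, by omega⟩
  obtain ⟨n, rfl⟩ : ∃ n : ℕ, t = (n : ℤ) := ⟨t.toNat, by omega⟩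
  have key := auxMain p R M hinit hbound hrec n r
  rw [key]
  have hz : ((1:ℝ) - p) ^ ((n:ℤ) + 1) = (1 - p) ^ (n+1) := by
    rw [show ((n:ℤ)+1) = ((n+1:ℕ):ℤ) from by push_cast; ring, zpow_natCast]
  rw [hz]
  have htn : ((n:ℤ)).toNat = n := by omega
  rw [htn]
  congr 1
  · congr 1
    rw [← Finset.Ico_add_one_right_eq_Icc, Finset.sum_Ico_eq_sum_range]
    have h1 : r + 1 + 1 - 1 = r + 1 := by omega
    rw [h1]
    rw [← Finset.sum_range_reflect (fun j => ((n+j).choose j : ℝ) * p^j) (r+1)]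
    apply Finset.sum_congr rfl
    intro i hi
    have hi' : i ≤ r := by simpa using Nat.lt_succ_iff.mp (Finset.mem_range.mp hi)
    have e1 : r + 1 - (1 + i) = r - i := by omega
    have e2 : ((n:ℤ) + ((r+1:ℕ):ℤ) - ((1+i:ℕ):ℤ)).toNat = n + (r - i) := by omega
    rw [e1, e2, show r+1-1-i = r - i from by omega]
  · congr 1
    apply Finset.sum_congr rfl
    intro s _
    have e3 : r + 1 + s - 1 = r + s := by omega
    rw [e3]
    norm_num
end

section
/- Let p ∈ (0,1) and R > 0, set η = (1−p)·exp(2R), and assume η < 1. Define Ẽ(δ) = (1+δ)·D(δ/(1+δ) ‖ 1−p) − 2Rδ for δ ∈ (0,∞). Then Ẽ is convex on (0,∞), differentiable with derivative Ẽ′(δ) = log( (δ/(1+δ)) / η ), and attains its unique minimum over (0,∞) at δ* = η/(1−η). -/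
open Real Set

lemma StrictConvexOn.lt_of_hasDerivAt_eq_zero {S : Set ℝ} {f : ℝ → ℝ} {x y : ℝ}
    (hf : StrictConvexOn ℝ S f) (hx : x ∈ S) (hy : y ∈ S) (hyx : y ≠ x)
    (hf' : HasDerivAt f 0 x) : f x < f y := by
  rcases hyx.lt_or_gt with hlt | hgt
  · have h := hf.slope_lt_of_hasDerivAt hy hx hlt hf'
    rw [slope_def_field, div_neg_iff] at h
    rcases h with ⟨-, h⟩ | ⟨h, -⟩ <;> linarith
  · have h := hf.lt_slope_of_hasDerivAt hx hy hgt hf'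
    rw [slope_def_field, div_pos_iff_of_pos_right (sub_pos.2 hgt)] at h
    linarith

lemma strictMonoOn_div_one_add : StrictMonoOn (fun x : ℝ => x / (1 + x)) (Ioi (-1)) := by
  intro x hx y hy hxy
  have hx' : 0 < 1 + x := by linarith [mem_Ioi.1 hx]
  have hy' : 0 < 1 + y := by linarith [mem_Ioi.1 hy]
  rw [div_lt_div_iff₀ hx' hy']
  linarith

lemma one_add_mul_klBin_div_one_add_s9 {q δ : ℝ} (hq₀ : q ≠ 0) (hq₁ : q ≠ 1) (hδ : 0 < δ) :
    (1 + δ) * klBin (δ / (1 + δ)) q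
      = δ * log δ - (1 + δ) * log (1 + δ) - δ * log q - log (1 - q) := by
  have h1δ : 1 + δ ≠ 0 := by positivity
  have hcompl : 1 - δ / (1 + δ) = (1 + δ)⁻¹ := by field_simp; ring
  rw [klBin, hcompl, log_div (by positivity) hq₀, log_div hδ.ne' h1δ,
    log_div (inv_ne_zero h1δ) (sub_ne_zero.2 hq₁.symm), log_inv]
  field_simp
  ring

/-- The paper's `Ẽ` (equation (85)). -/
noncomputable def Etilde (p R δ : ℝ) : ℝ :=
  (1 + δ) * klBin (δ / (1 + δ)) (1 - p) - 2 * R * δ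

section Etilde

variable {p R : ℝ}

lemma Etilde_eq (hp₀ : 0 < p) (hp₁ : p < 1) {δ : ℝ} (hδ : 0 < δ) :
    Etilde p R δ = δ * log δ - (1 + δ) * log (1 + δ)
      - δ * log ((1 - p) * exp (2 * R)) - log p := by
  rw [Etilde, one_add_mul_klBin_div_one_add_s9 (by linarith) (by linarith) hδ,
    log_mul (by linarith) (exp_ne_zero _), log_exp, sub_sub_cancel]
  ring

lemma hasDerivAt_Etilde (hp₀ : 0 < p) (hp₁ : p < 1) {δ : ℝ} (hδ : 0 < δ) :
    HasDerivAt (Etilde p R) (log (δ / (1 + δ) / ((1 - p) * exp (2 * R)))) δ := by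
  have h1δ : 0 < 1 + δ := by linarith
  have hη : 0 < (1 - p) * exp (2 * R) := by have := sub_pos.2 hp₁; positivity
  have hclosed := ((((hasDerivAt_mul_log hδ.ne').sub
      ((hasDerivAt_mul_log h1δ.ne').comp_const_add 1 δ)).sub
      ((hasDerivAt_id δ).mul_const (log ((1 - p) * exp (2 * R))))).sub_const (log p))
  rw [log_div (by positivity) hη.ne', log_div hδ.ne' h1δ.ne']
  refine (hclosed.congr_deriv (by ring)).congr_of_eventuallyEq ?_
  filter_upwards [Ioi_mem_nhds hδ] with x hx
  exact Etilde_eq hp₀ hp₁ hx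

lemma strictConvexOn_Etilde (hp₀ : 0 < p) (hp₁ : p < 1) :
    StrictConvexOn ℝ (Ioi 0) (Etilde p R) := by
  have hη : 0 < (1 - p) * exp (2 * R) := by have := sub_pos.2 hp₁; positivity
  refine StrictMonoOn.strictConvexOn_of_deriv (convex_Ioi 0)
    (fun x hx => (hasDerivAt_Etilde hp₀ hp₁ hx).continuousAt.continuousWithinAt) ?_
  rw [interior_Ioi]
  intro x hx y hy hxy
  rw [(hasDerivAt_Etilde hp₀ hp₁ hx).deriv, (hasDerivAt_Etilde hp₀ hp₁ hy).deriv]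
  have hmono := strictMonoOn_div_one_add (Ioi_subset_Ioi (by norm_num) hx)
    (Ioi_subset_Ioi (by norm_num) hy) hxy
  have hx' : 0 < 1 + x := by linarith [mem_Ioi.1 hx]
  exact log_lt_log (div_pos (div_pos hx hx') hη) (div_lt_div_of_pos_right hmono hη)

end Etilde

theorem stmt9_general (p R : ℝ) (hp0 : 0 < p) (hp1 : p < 1)
    (η : ℝ) (hη : η = (1 - p) * Real.exp (2 * R)) (hη1 : η < 1) :
    ConvexOn ℝ (Set.Ioi (0 : ℝ))
        (fun δ : ℝ => (1 + δ) * klBin (δ / (1 + δ)) (1 - p) - 2 * R * δ) ∧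
    (∀ δ : ℝ, δ ∈ Set.Ioi (0 : ℝ) →
      HasDerivAt (fun δ : ℝ => (1 + δ) * klBin (δ / (1 + δ)) (1 - p) - 2 * R * δ)
        (Real.log ((δ / (1 + δ)) / η)) δ) ∧
    (∀ δ : ℝ, δ ∈ Set.Ioi (0 : ℝ) → δ ≠ η / (1 - η) →
      (1 + η / (1 - η)) * klBin ((η / (1 - η)) / (1 + η / (1 - η))) (1 - p)
          - 2 * R * (η / (1 - η)) <
        (1 + δ) * klBin (δ / (1 + δ)) (1 - p) - 2 * R * δ) := by
  have hη₀ : 0 < η := by have := sub_pos.2 hp1; rw [hη]; positivity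
  have hδstar : 0 < η / (1 - η) := div_pos hη₀ (sub_pos.2 hη1)
  have hstationary : HasDerivAt (Etilde p R) 0 (η / (1 - η)) := by
    have hratio : η / (1 - η) / (1 + η / (1 - η)) = η := by
      field_simp [(sub_pos.2 hη1).ne']
      ring
    have h := hasDerivAt_Etilde (R := R) hp0 hp1 hδstar
    rwa [hratio, ← hη, div_self hη₀.ne', log_one] at h
  refine ⟨(strictConvexOn_Etilde hp0 hp1).convexOn,
    fun δ hδ => hη ▸ hasDerivAt_Etilde hp0 hp1 hδ, fun δ hδ hne => ?_⟩
  exact (strictConvexOn_Etilde hp0 hp1).lt_of_hasDerivAt_eq_zero hδstar hδ hne hstationary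

/-- equation (85) of the paper. Let `p ∈ (0,1)`, `R > 0`,
`η = (1−p)·exp(2R) < 1`, and `Ẽ(δ) = (1+δ)·D(δ/(1+δ) ‖ 1−p) − 2Rδ`. Then `Ẽ` is convex
on `(0,∞)`, differentiable there with derivative `Ẽ′(δ) = log((δ/(1+δ))/η)`, and it
attains its unique minimum over `(0,∞)` at `δ* = η/(1−η)`. -/
theorem stmt9 (p R : ℝ) (hp0 : 0 < p) (hp1 : p < 1) (hR : 0 < R)
    (η : ℝ) (hη : η = (1 - p) * Real.exp (2 * R)) (hη1 : η < 1) :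
    ConvexOn ℝ (Set.Ioi (0 : ℝ))
        (fun δ : ℝ => (1 + δ) * klBin (δ / (1 + δ)) (1 - p) - 2 * R * δ) ∧
    (∀ δ : ℝ, δ ∈ Set.Ioi (0 : ℝ) →
      HasDerivAt (fun δ : ℝ => (1 + δ) * klBin (δ / (1 + δ)) (1 - p) - 2 * R * δ)
        (Real.log ((δ / (1 + δ)) / η)) δ) ∧
    (∀ δ : ℝ, δ ∈ Set.Ioi (0 : ℝ) → δ ≠ η / (1 - η) →
      (1 + η / (1 - η)) * klBin ((η / (1 - η)) / (1 + η / (1 - η))) (1 - p)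
          - 2 * R * (η / (1 - η)) <
        (1 + δ) * klBin (δ / (1 + δ)) (1 - p) - 2 * R * δ) :=
  stmt9_general p R hp0 hp1 η hη hη1
end

section
/- Let P > 0, write p̄ = P/(1+P) and C = (1/2)·log(1+P), let 0 < R < C, and set η = (1−p̄)·exp(2R) = exp(−2(C−R)) ∈ (0,1). Let M : ℤ≥0 × ℤ≥−1 → ℝ satisfy M(r,−1) = 1 for r ≥ 1, M(0,t) = exp(−2R(t+1)) for t ≥ 0, and M(r,t) = p̄·M(r−1,t) + (1−p̄)·M(r,t−1) for r ≥ 1, t ≥ 0. Define E_S(v) = (1/(1−η))·D(1−η‖p̄) + 2R·(1/v − η/(1−η)) for 0 < v ≤ (1−η)/η, E_S(v) = ((1+v)/v)·D(v/(1+v)‖p̄) for (1−η)/η < v ≤ P, and E_S(v) = 0 for v > P. Then for every real v > 0, limsup_{r→∞} (1/r) · log M(r, ⌊r/v⌋) ≤ −E_S(v). -/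
open Filter

open Real Topology

/-!
The recurrence for `M` is monotone, so `M` is squeezed between sub- and supersolutions with
the same boundary data. Exponentials `exp (α r + β t + γ)` solve it whenever
`p e^{-α} + (1 - p) e^{-β} = 1`. A sum of two of them, one dominating the data on `r = 0`
(with a free parameter `μ ≥ 1`) and one dominating the data on `t = -1`, bounds `M` from above;
along `t = ⌊r / v⌋` its growth rate is the larger of `sourceRate … μ` and `channelRate`. Taking
`μ = 1` for `v ≤ (1 - η) / η` and the optimal `μ = η (1 + v)` otherwise gives the two nonzero
branches of `E_S`; for `v > P` one only needs `M ≤ 1`. The lower bound `M ≥ (1 - p)^(t + 1)`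
keeps `log M / r` bounded below, without which the real `limsup` would be a junk value.
-/

theorem le_of_recurrence_comparison {p q : ℝ} (hp : 0 ≤ p) (hq : 0 ≤ q) {A B : ℕ → ℤ → ℝ}
    (hA : ∀ r : ℕ, 1 ≤ r → ∀ t : ℤ, 0 ≤ t → A r t ≤ p * A (r - 1) t + q * A r (t - 1))
    (hB : ∀ r : ℕ, 1 ≤ r → ∀ t : ℤ, 0 ≤ t → p * B (r - 1) t + q * B r (t - 1) ≤ B r t)
    (h0 : ∀ t : ℤ, 0 ≤ t → A 0 t ≤ B 0 t) (h1 : ∀ r : ℕ, 1 ≤ r → A r (-1) ≤ B r (-1)) :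
    ∀ (r : ℕ) (t : ℤ), 0 ≤ t → A r t ≤ B r t := by
  intro r
  induction r with
  | zero => exact h0
  | succ n ih =>
    have key : ∀ t : ℤ, -1 ≤ t → A (n + 1) t ≤ B (n + 1) t := by
      refine Int.leInduction (h1 _ n.succ_pos) fun t ht hAB => ?_
      have hA' := hA (n + 1) n.succ_pos (t + 1) (by omega)
      have hB' := hB (n + 1) n.succ_pos (t + 1) (by omega)
      simp only [Nat.add_sub_cancel, add_sub_cancel_right] at hA' hB'
      calc A (n + 1) (t + 1) ≤ p * A n (t + 1) + q * A (n + 1) t := hA'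
        _ ≤ p * B n (t + 1) + q * B (n + 1) t := by gcongr; exact ih _ (by omega)
        _ ≤ B (n + 1) (t + 1) := hB'
    exact fun t ht => key t (by omega)

theorem limsup_inv_mul_log_le_max {g : ℕ → ℝ} {a b c : ℝ}
    (hlow : ∀ᶠ r : ℕ in atTop, exp (r * c) ≤ g r)
    (hup : ∀ᶠ r : ℕ in atTop, g r ≤ exp (r * a) + exp (r * b)) :
    limsup (fun r : ℕ => 1 / (r : ℝ) * log (g r)) atTop ≤ max a b := by
  have hbounds : ∀ᶠ r : ℕ in atTop,
      c ≤ 1 / (r : ℝ) * log (g r) ∧ 1 / (r : ℝ) * log (g r) ≤ max a b + log 2 / r := by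
    filter_upwards [hlow, hup, eventually_gt_atTop 0] with r hl hu hr
    have hr : (0 : ℝ) < r := by exact_mod_cast hr
    have hg : 0 < g r := (exp_pos _).trans_le hl
    have hg2 : g r ≤ 2 * exp (r * max a b) := by
      have ha := exp_le_exp.2 (mul_le_mul_of_nonneg_left (le_max_left a b) hr.le)
      have hb := exp_le_exp.2 (mul_le_mul_of_nonneg_left (le_max_right a b) hr.le)
      linarith
    constructor
    · calc c = 1 / r * (r * c) := by field_simp
        _ ≤ 1 / r * log (g r) := by gcongr; exact (le_log_iff_exp_le hg).2 hl
    · calc 1 / r * log (g r) ≤ 1 / r * log (2 * exp (r * max a b)) := by gcongr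
        _ = max a b + log 2 / r := by
          rw [log_mul two_ne_zero (exp_pos _).ne', log_exp]; field_simp; ring
  have hlim : Tendsto (fun r : ℕ => max a b + log 2 / r) atTop (𝓝 (max a b)) := by
    simpa using (tendsto_const_div_atTop_nhds_zero_nat (log 2)).const_add (max a b)
  calc limsup (fun r : ℕ => 1 / (r : ℝ) * log (g r)) atTop
      ≤ limsup (fun r : ℕ => max a b + log 2 / r) atTop :=
        limsup_le_limsup (hbounds.mono fun _ h => h.2)
          (isCoboundedUnder_le_of_eventually_le _ (hbounds.mono fun _ h => h.1))
          hlim.isBoundedUnder_le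
    _ = max a b := hlim.limsup_eq

noncomputable def expGrid (α β γ : ℝ) (r : ℕ) (t : ℤ) : ℝ := exp (α * r + β * t + γ)

theorem expGrid_recurrence (p q α β γ : ℝ) {r : ℕ} (hr : 1 ≤ r) (t : ℤ) :
    p * expGrid α β γ (r - 1) t + q * expGrid α β γ r (t - 1) =
      (p * exp (-α) + q * exp (-β)) * expGrid α β γ r t := by
  simp only [expGrid, Nat.cast_sub hr, Int.cast_sub, Nat.cast_one, Int.cast_one]
  rw [add_mul, mul_assoc, mul_assoc, ← exp_add, ← exp_add]
  ring_nf

noncomputable def sourceRate (p R η v μ : ℝ) : ℝ := log (p / (1 - η / μ)) + (log μ - 2 * R) / v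

noncomputable def channelRate (p v : ℝ) : ℝ := log (p * (1 + v) / v) + log ((1 - p) * (1 + v)) / v

theorem one_le_mul_one_add_div {p v : ℝ} (hv : 0 < v) (hvp : v / (1 + v) ≤ p) :
    1 ≤ p * (1 + v) / v := by
  rw [le_div_iff₀ hv, one_mul]
  rwa [div_le_iff₀ (by linarith)] at hvp

theorem one_sub_mul_one_add_le_one {p v : ℝ} (hv : 0 < v) (hvp : v / (1 + v) ≤ p) :
    (1 - p) * (1 + v) ≤ 1 := by
  rw [div_le_iff₀ (by linarith)] at hvp
  linarith

theorem sourceRate_one {p R η : ℝ} (v : ℝ) (hp : 0 < p) (hη0 : 0 < η) (hη1 : η < 1)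
    (hη : η = (1 - p) * exp (2 * R)) :
    sourceRate p R η v 1 = -(1 / (1 - η) * klBin (1 - η) p + 2 * R * (1 / v - η / (1 - η))) := by
  have hq : 1 - p ≠ 0 := by rintro h; rw [h, zero_mul] at hη; linarith
  have hlogη : log (η / (1 - p)) = 2 * R := by
    rw [hη, mul_div_cancel_left₀ _ hq, log_exp]
  have h1η : 1 - η ≠ 0 := by linarith
  simp only [sourceRate, klBin, div_one, log_one, sub_sub_cancel, hlogη]
  rw [log_div hp.ne' h1η, log_div h1η hp.ne']
  field_simp
  ring

theorem sourceRate_eq_channelRate {p R η : ℝ} {v : ℝ} (hp1 : p < 1) (hv : 0 < v)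
    (hη : η = (1 - p) * exp (2 * R)) :
    sourceRate p R η v (η * (1 + v)) = channelRate p v := by
  have hη0 : 0 < η := by rw [hη]; exact mul_pos (sub_pos.2 hp1) (exp_pos _)
  have hfrac : p / (1 - η / (η * (1 + v))) = p * (1 + v) / v := by
    rw [show 1 - η / (η * (1 + v)) = v / (1 + v) by field_simp; ring, div_div_eq_mul_div]
  have hlog : log (η * (1 + v)) - 2 * R = log ((1 - p) * (1 + v)) := by
    rw [hη, mul_right_comm, log_mul (by nlinarith) (exp_pos _).ne', log_exp]
    ring
  rw [sourceRate, channelRate, hfrac, hlog]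

theorem sourceRate_mul_one_add_le {p R η v μ : ℝ} (hp : 0 < p) (hη : 0 < η) (hv : 0 < v)
    (hημ : η < μ) :
    sourceRate p R η v (η * (1 + v)) ≤ sourceRate p R η v μ := by
  have hμ : 0 < μ := hη.trans hημ
  have h1 : 0 < 1 - η / μ := sub_pos.2 ((div_lt_one hμ).2 hημ)
  have hx : log (p / (1 - η / (η * (1 + v)))) - log (p / (1 - η / μ)) =
      log ((1 + v) * (1 - η / μ) / v) := by
    rw [show 1 - η / (η * (1 + v)) = v / (1 + v) by field_simp; ring,
      ← log_div (by positivity) (by positivity)]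
    congr 1
    field_simp
  have hy :
      (log (η * (1 + v)) - 2 * R) / v - (log μ - 2 * R) / v = log (η * (1 + v) / μ) / v := by
    rw [log_div (by positivity) hμ.ne']
    ring
  -- `log u ≤ u - 1` at both ratios; the right-hand sides cancel exactly.
  have hxy : (1 + v) * (1 - η / μ) / v - 1 + (η * (1 + v) / μ - 1) / v = 0 := by
    field_simp
    ring
  have hlx := log_le_sub_one_of_pos (show 0 < (1 + v) * (1 - η / μ) / v by positivity)
  have hly := div_le_div_of_nonneg_right
    (log_le_sub_one_of_pos (show 0 < η * (1 + v) / μ by positivity)) hv.le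
  simp only [sourceRate]
  linarith

theorem channelRate_eq_neg_klBin {p v : ℝ} (hp0 : 0 < p) (hp1 : p < 1) (hv : 0 < v) :
    channelRate p v = -((1 + v) / v * klBin (v / (1 + v)) p) := by
  have hq : 0 < 1 - p := sub_pos.2 hp1
  have h1 : v / (1 + v) / p = (p * (1 + v) / v)⁻¹ := by field_simp
  have h2 : (1 - v / (1 + v)) / (1 - p) = ((1 - p) * (1 + v))⁻¹ := by field_simp; ring
  rw [klBin, h1, h2, log_inv, log_inv, channelRate]
  field_simp
  ring

structure IsStreamingMSE (p R : ℝ) (M : ℕ → ℤ → ℝ) : Prop where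
  init : ∀ r : ℕ, 1 ≤ r → M r (-1) = 1
  boundary : ∀ t : ℤ, 0 ≤ t → M 0 t = exp (-2 * R * (t + 1))
  recurrence : ∀ r : ℕ, 1 ≤ r → ∀ t : ℤ, 0 ≤ t → M r t = p * M (r - 1) t + (1 - p) * M r (t - 1)

namespace IsStreamingMSE

variable {p R : ℝ} {M : ℕ → ℤ → ℝ}

theorem le_of_supersolution (hM : IsStreamingMSE p R M) (hp0 : 0 ≤ p) (hp1 : p ≤ 1)
    {B : ℕ → ℤ → ℝ}
    (hB : ∀ r : ℕ, 1 ≤ r → ∀ t : ℤ, 0 ≤ t → p * B (r - 1) t + (1 - p) * B r (t - 1) ≤ B r t)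
    (h0 : ∀ t : ℤ, 0 ≤ t → exp (-2 * R * (t + 1)) ≤ B 0 t)
    (h1 : ∀ r : ℕ, 1 ≤ r → 1 ≤ B r (-1)) :
    ∀ (r : ℕ) (t : ℤ), 0 ≤ t → M r t ≤ B r t :=
  le_of_recurrence_comparison hp0 (sub_nonneg.2 hp1)
    (fun r hr t ht => (hM.recurrence r hr t ht).le) hB
    (fun t ht => hM.boundary t ht ▸ h0 t ht) (fun r hr => hM.init r hr ▸ h1 r hr)

theorem ge_of_subsolution (hM : IsStreamingMSE p R M) (hp0 : 0 ≤ p) (hp1 : p ≤ 1)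
    {A : ℕ → ℤ → ℝ}
    (hA : ∀ r : ℕ, 1 ≤ r → ∀ t : ℤ, 0 ≤ t → A r t ≤ p * A (r - 1) t + (1 - p) * A r (t - 1))
    (h0 : ∀ t : ℤ, 0 ≤ t → A 0 t ≤ exp (-2 * R * (t + 1)))
    (h1 : ∀ r : ℕ, 1 ≤ r → A r (-1) ≤ 1) :
    ∀ (r : ℕ) (t : ℤ), 0 ≤ t → A r t ≤ M r t :=
  le_of_recurrence_comparison hp0 (sub_nonneg.2 hp1) hA
    (fun r hr t ht => (hM.recurrence r hr t ht).ge)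
    (fun t ht => hM.boundary t ht ▸ h0 t ht) (fun r hr => hM.init r hr ▸ h1 r hr)

theorem le_one (hM : IsStreamingMSE p R M) (hp0 : 0 ≤ p) (hp1 : p ≤ 1) (hR : 0 ≤ R) :
    ∀ (r : ℕ) (t : ℤ), 0 ≤ t → M r t ≤ 1 :=
  hM.le_of_supersolution hp0 hp1 (B := fun _ _ => 1) (fun _ _ _ _ => by linarith)
    (fun t ht => exp_le_one_iff.2 (by nlinarith [(Int.cast_nonneg (R := ℝ) ht), hR]))
    (fun _ _ => le_rfl)

theorem one_sub_zpow_le (hM : IsStreamingMSE p R M) (hp0 : 0 ≤ p) (hp1 : p < 1)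
    (hη : (1 - p) * exp (2 * R) ≤ 1) :
    ∀ (r : ℕ) (t : ℤ), 0 ≤ t → (1 - p) ^ (t + 1) ≤ M r t := by
  have hq : 0 < 1 - p := sub_pos.2 hp1
  have hqR : 1 - p ≤ exp (-2 * R) := by
    calc 1 - p = (1 - p) * exp (2 * R) * exp (-2 * R) := by rw [mul_assoc, ← exp_add]; simp
      _ ≤ exp (-2 * R) := mul_le_of_le_one_left (exp_pos _).le hη
  refine hM.ge_of_subsolution hp0 hp1.le (fun r hr t ht => ?_) (fun t ht => ?_) (fun _ _ => by simp)
  · rw [sub_add_cancel, ← zpow_one_add₀ hq.ne', add_comm 1 t]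
    nlinarith [zpow_pos hq (t + 1)]
  · lift t to ℕ using ht
    rw [show ((t : ℤ) + 1) = ((t + 1 : ℕ) : ℤ) by push_cast; ring, zpow_natCast,
      show -2 * R * ((t : ℤ) + 1 : ℝ) = ((t + 1 : ℕ) : ℝ) * (-2 * R) by push_cast; ring,
      exp_nat_mul]
    exact pow_le_pow_left₀ hq.le hqR _

theorem le_expGrid_add_expGrid (hM : IsStreamingMSE p R M) (hp1 : p < 1) {η μ v : ℝ}
    (hη : η = (1 - p) * exp (2 * R)) (hμ : 1 ≤ μ) (hημ : η < μ) (hv : 0 < v)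
    (hvp : v / (1 + v) ≤ p) :
    ∀ (r : ℕ) (t : ℤ), 0 ≤ t → M r t ≤
      expGrid (log (p / (1 - η / μ))) (log μ - 2 * R) (-2 * R) r t +
        expGrid (log (p * (1 + v) / v)) (log ((1 - p) * (1 + v)))
          (log ((1 - p) * (1 + v)) - log (p * (1 + v) / v)) r t := by
  have hp0 : 0 < p := (div_pos hv (by linarith)).trans_le hvp
  have hq : 0 < 1 - p := sub_pos.2 hp1
  have hμ0 : 0 < μ := by linarith
  have hημ' : 0 < 1 - η / μ := sub_pos.2 ((div_lt_one hμ0).2 hημ)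
  have hsource : p * exp (-log (p / (1 - η / μ))) + (1 - p) * exp (-(log μ - 2 * R)) = 1 := by
    rw [exp_neg, exp_log (div_pos hp0 hημ'), neg_sub, exp_sub, exp_log hμ0, hη]
    field_simp
    ring
  have hchannel :
      p * exp (-log (p * (1 + v) / v)) + (1 - p) * exp (-log ((1 - p) * (1 + v))) = 1 := by
    rw [exp_neg, exp_neg, exp_log (by positivity), exp_log (by positivity)]
    field_simp
    ring
  refine hM.le_of_supersolution hp0.le hp1.le (fun r hr t _ => ?_) (fun t ht => ?_) (fun r hr => ?_)
  · have e1 := expGrid_recurrence p (1 - p) (log (p / (1 - η / μ))) (log μ - 2 * R) (-2 * R) hr t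
    have e2 := expGrid_recurrence p (1 - p) (log (p * (1 + v) / v)) (log ((1 - p) * (1 + v)))
      (log ((1 - p) * (1 + v)) - log (p * (1 + v) / v)) hr t
    rw [hsource, one_mul] at e1
    rw [hchannel, one_mul] at e2
    linarith
  · refine le_add_of_le_of_nonneg (exp_le_exp.2 ?_) (exp_pos _).le
    have : 0 ≤ (t : ℝ) * log μ := mul_nonneg (by exact_mod_cast ht) (log_nonneg hμ)
    push_cast
    linarith
  · refine le_add_of_nonneg_of_le (exp_pos _).le (one_le_exp ?_)
    have : 0 ≤ ((r : ℝ) - 1) * log (p * (1 + v) / v) :=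
      mul_nonneg (sub_nonneg.2 (by exact_mod_cast hr)) (log_nonneg (one_le_mul_one_add_div hv hvp))
    push_cast
    linarith

theorem le_exp_sourceRate_add_exp_channelRate (hM : IsStreamingMSE p R M) (hp1 : p < 1)
    (hR : 0 ≤ R) {η μ v : ℝ} (hη : η = (1 - p) * exp (2 * R)) (hμ : 1 ≤ μ) (hημ : η < μ)
    (hv : 0 < v) (hvp : v / (1 + v) ≤ p) (r : ℕ) :
    M r ⌊(r : ℝ) / v⌋₊ ≤ exp (r * sourceRate p R η v μ) + exp (r * channelRate p v) := by
  set T := ⌊(r : ℝ) / v⌋₊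
  have hT : (T : ℝ) ≤ r / v := Nat.floor_le (by positivity)
  have hT' : (r : ℝ) / v ≤ T + 1 := (Nat.lt_floor_add_one _).le
  have hlam : 0 ≤ log (p * (1 + v) / v) := log_nonneg (one_le_mul_one_add_div hv hvp)
  have hlogq : log ((1 - p) * (1 + v)) ≤ 0 :=
    log_nonpos (mul_nonneg (by linarith) (by linarith)) (one_sub_mul_one_add_le_one hv hvp)
  refine (hM.le_expGrid_add_expGrid hp1 hη hμ hημ hv hvp r T (Int.natCast_nonneg T)).trans
    (add_le_add (exp_le_exp.2 ?_) (exp_le_exp.2 ?_))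
  · have h1 := mul_le_mul_of_nonneg_left hT (log_nonneg hμ)
    have h2 := mul_le_mul_of_nonneg_left hT' (by linarith : 0 ≤ 2 * R)
    simp only [sourceRate, Int.cast_natCast]
    linear_combination h1 + h2
  · have h1 := mul_le_mul_of_nonpos_left hT' hlogq
    simp only [channelRate, Int.cast_natCast]
    linear_combination h1 + hlam

theorem limsup_le_max (hM : IsStreamingMSE p R M) (hp0 : 0 ≤ p) (hp1 : p < 1)
    (hη : (1 - p) * exp (2 * R) ≤ 1) {v : ℝ} (hv : 0 < v) {a b : ℝ}
    (h : ∀ r : ℕ, M r ⌊(r : ℝ) / v⌋₊ ≤ exp (r * a) + exp (r * b)) :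
    limsup (fun r : ℕ => 1 / (r : ℝ) * log (M r ⌊(r : ℝ) / v⌋₊)) atTop ≤ max a b := by
  refine limsup_inv_mul_log_le_max (c := (1 / v + 1) * log (1 - p)) ?_ (.of_forall h)
  filter_upwards [eventually_ge_atTop 1] with r hr
  have hr : (1 : ℝ) ≤ r := by exact_mod_cast hr
  have hq : 0 < 1 - p := sub_pos.2 hp1
  set T := ⌊(r : ℝ) / v⌋₊
  have hT : (T : ℝ) + 1 ≤ r * (1 / v + 1) := by
    have : (T : ℝ) ≤ r / v := Nat.floor_le (by positivity)
    rw [mul_add, mul_one, mul_one_div]; linarith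
  calc exp (r * ((1 / v + 1) * log (1 - p))) ≤ exp ((T + 1) * log (1 - p)) := by
        rw [← mul_assoc]
        exact exp_le_exp.2 (mul_le_mul_of_nonpos_right hT (log_nonpos hq.le (by linarith)))
    _ = (1 - p) ^ ((T : ℤ) + 1) := by
        rw [show ((T : ℤ) + 1) = ((T + 1 : ℕ) : ℤ) by push_cast; ring, zpow_natCast,
          ← exp_log hq, ← exp_nat_mul, exp_log hq]
        push_cast; ring_nf
    _ ≤ M r T := hM.one_sub_zpow_le hp0 hp1 hη r T (Int.natCast_nonneg T)

end IsStreamingMSE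

/-- Theorem 4 of the paper: streaming MSE exponent.
Let `P > 0`, `p̄ = P/(1+P)`, `C = (1/2)log(1+P)`, `0 < R < C`,
`η = (1−p̄)·exp(2R) = exp(−2(C−R)) ∈ (0,1)`. Let `M` satisfy `M(r,−1) = 1` for `r ≥ 1`,
`M(0,t) = exp(−2R(t+1))` for `t ≥ 0`, and
`M(r,t) = p̄·M(r−1,t) + (1−p̄)·M(r,t−1)` for `r ≥ 1`, `t ≥ 0`. With
`E_S(v) = (1/(1−η))·D(1−η‖p̄) + 2R·(1/v − η/(1−η))` for `0 < v ≤ (1−η)/η`,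
`E_S(v) = ((1+v)/v)·D(v/(1+v)‖p̄)` for `(1−η)/η < v ≤ P`, and `E_S(v) = 0` for `v > P`,
we have, for every `v > 0`,
`limsup_{r→∞} (1/r)·log M(r,⌊r/v⌋) ≤ −E_S(v)`. -/
theorem stmt11 (P : ℝ) (hP : 0 < P) (R : ℝ) (hR0 : 0 < R)
    (hRC : R < (1 / 2) * Real.log (1 + P))
    (η : ℝ) (hη : η = (1 - P / (1 + P)) * Real.exp (2 * R))
    (M : ℕ → ℤ → ℝ)
    (hinit : ∀ r : ℕ, 1 ≤ r → M r (-1) = 1)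
    (hbound : ∀ t : ℤ, 0 ≤ t → M 0 t = Real.exp (-2 * R * (t + 1)))
    (hrec : ∀ r : ℕ, 1 ≤ r → ∀ t : ℤ, 0 ≤ t →
      M r t = (P / (1 + P)) * M (r - 1) t + (1 - P / (1 + P)) * M r (t - 1)) :
    ∀ v : ℝ, 0 < v →
      Filter.limsup
          (fun r : ℕ => (1 / (r : ℝ)) * Real.log (M r (⌊(r : ℝ) / v⌋₊ : ℤ))) atTop ≤
        -(if v ≤ (1 - η) / η then
            (1 / (1 - η)) * klBin (1 - η) (P / (1 + P)) + 2 * R * (1 / v - η / (1 - η))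
          else if v ≤ P then
            ((1 + v) / v) * klBin (v / (1 + v)) (P / (1 + P))
          else 0) := by
  intro v hv
  set p := P / (1 + P) with hp
  have hp0 : 0 < p := by positivity
  have hp1 : p < 1 := (div_lt_one (by linarith)).2 (by linarith)
  have hM : IsStreamingMSE p R M := ⟨hinit, hbound, hrec⟩
  have hηP : η * (1 + P) = exp (2 * R) := by rw [hη, hp]; field_simp; ring
  have hη0 : 0 < η := hη ▸ mul_pos (sub_pos.2 hp1) (exp_pos _)
  have hη1 : η < 1 := by
    have : exp (2 * R) < 1 + P := by
      rw [← exp_log (by linarith : 0 < 1 + P)]; exact exp_lt_exp.2 (by linarith)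
    nlinarith
  have hηle : (1 - p) * exp (2 * R) ≤ 1 := hη ▸ hη1.le
  have hvp : v ≤ P → v / (1 + v) ≤ p := fun h => by
    rw [hp, div_le_div_iff₀ (by linarith) (by linarith)]; nlinarith
  split_ifs with hsmall hmid
  · have hvP : v ≤ P := hsmall.trans <| by
      rw [div_le_iff₀ hη0]; nlinarith [one_le_exp (by linarith : 0 ≤ 2 * R)]
    calc _ ≤ max (sourceRate p R η v 1) (channelRate p v) :=
          hM.limsup_le_max hp0.le hp1 hηle hv <|
            hM.le_exp_sourceRate_add_exp_channelRate hp1 hR0.le hη le_rfl hη1 hv (hvp hvP)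
      _ = sourceRate p R η v 1 := max_eq_left <| (sourceRate_eq_channelRate hp1 hv hη).symm.trans_le
          (sourceRate_mul_one_add_le hp0 hη0 hv hη1)
      _ = _ := sourceRate_one v hp0 hη0 hη1 hη
  · have hμ : 1 ≤ η * (1 + v) := by
      have := (div_lt_iff₀ hη0).1 (not_le.1 hsmall); nlinarith
    calc _ ≤ max (sourceRate p R η v (η * (1 + v))) (channelRate p v) :=
          hM.limsup_le_max hp0.le hp1 hηle hv <|
            hM.le_exp_sourceRate_add_exp_channelRate hp1 hR0.le hη hμ (by nlinarith) hv (hvp hmid)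
      _ = channelRate p v := by rw [sourceRate_eq_channelRate hp1 hv hη, max_self]
      _ = _ := channelRate_eq_neg_klBin hp0 hp1 hv
  · calc _ ≤ max 0 0 := hM.limsup_le_max hp0.le hp1 hηle hv fun r => by
          simp only [mul_zero, exp_zero]
          linarith [hM.le_one hp0.le hp1.le hR0.le r ⌊(r : ℝ) / v⌋₊ (Int.natCast_nonneg _)]
      _ = -0 := by simp
end
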